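/- Let S = {a₁,a₂} × {b₁,b₂} be the 2×2 rectangular band and F a field. Then J_L ∩ J_R = F·((a₁,b₁) − (a₁,b₂) − (a₂,b₁) + (a₂,b₂)) is the unique minimal nonzero two-sided ideal of F[S]: every nonzero ideal of F[S] contains it. -/

import Mathlib

inductive L2 : Type | a1 | a2
deriving DecidableEq

instance : Fintype L2 := ⟨{L2.a1, L2.a2}, fun x => by cases x <;> simp⟩

instance : Semigroup L2 where
  mul x _ := x
  mul_assoc _ _ _ := rfl

inductive R2 : Type | b1 | b2
deriving DecidableEq

instance : Fintype R2 := ⟨{R2.b1, R2.b2}, fun x => by cases x <;> simp⟩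

instance : Semigroup R2 where
  mul _ y := y
  mul_assoc _ _ _ := rfl

abbrev RB : Type := L2 × R2

def IsTwoSidedIdeal {F A : Type*} [Field F] [NonUnitalNonAssocSemiring A]
    [Module F A] (J : Submodule F A) : Prop :=
  ∀ a x : A, x ∈ J → a * x ∈ J ∧ x * a ∈ J

variable (F : Type*) [Field F]

/-- The sum-of-coefficients (augmentation) linear map on `F[S]`. -/
noncomputable def coeffSum : MonoidAlgebra F RB →ₗ[F] F where
  toFun x := ∑ s : RB, x.coeff s
  map_add' x y := by
    simp only [show ∀ s, (x + y).coeff s = x.coeff s + y.coeff s from fun _ => rfl, Finset.sum_add_distrib]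
  map_smul' c x := by
    simp only [show ∀ s, (c • x).coeff s = c * x.coeff s from fun _ => rfl, Finset.mul_sum,
      RingHom.id_apply, smul_eq_mul]

/-- `J_L`: the kernel of the map `F[S] → F[L]` induced by the projection. -/
noncomputable def JL : Submodule F (MonoidAlgebra F RB) :=
  LinearMap.ker (Finsupp.lmapDomain F F (Prod.fst : RB → L2) ∘ₗ
    (MonoidAlgebra.coeffLinearEquiv F).toLinearMap)

/-- `J_R`: the kernel of the map `F[S] → F[R]` induced by the projection. -/
noncomputable def JR : Submodule F (MonoidAlgebra F RB) :=
  LinearMap.ker (Finsupp.lmapDomain F F (Prod.snd : RB → R2) ∘ₗ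
    (MonoidAlgebra.coeffLinearEquiv F).toLinearMap)

/-- The element `C = (a₁,b₁) − (a₁,b₂) − (a₂,b₁) + (a₂,b₂)`. -/
noncomputable def Celt : MonoidAlgebra F RB :=
  MonoidAlgebra.single (L2.a1, R2.b1) 1 - MonoidAlgebra.single (L2.a1, R2.b2) 1
    - MonoidAlgebra.single (L2.a2, R2.b1) 1 + MonoidAlgebra.single (L2.a2, R2.b2) 1

/-! Left multiplication by `(i,b)` replaces each column of the 2×2 coefficient matrix of `x` by its
sum, placed in row `i`; right multiplication acts dually on rows. Hence, for
`u = (a₁,b₁) − (a₂,b₁)` and `v = (a₁,b₁) − (a₁,b₂)`, one gets `u x v = ε(x) C` with `ε` the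
augmentation, and when `ε(x) = 0` also `u x = c₁(x) C` and `x v = r₁(x) C` for the first column
and row sums. If all three scalars vanish, `x` lies in `J_L ∩ J_R = F C`. Either way a nonzero
ideal contains a nonzero multiple of `C`. -/

section

open MonoidAlgebra L2 R2

variable {F}

@[simp] lemma L2.mul_eq_left (x y : L2) : x * y = x := rfl
@[simp] lemma R2.mul_eq_right (x y : R2) : x * y = y := rfl

lemma L2.sum_univ {M : Type*} [AddCommMonoid M] (f : L2 → M) : ∑ i, f i = f a1 + f a2 := by
  rw [show (Finset.univ : Finset L2) = {a1, a2} from rfl, Finset.sum_pair (by decide)]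

lemma R2.sum_univ {M : Type*} [AddCommMonoid M] (f : R2 → M) : ∑ j, f j = f b1 + f b2 := by
  rw [show (Finset.univ : Finset R2) = {b1, b2} from rfl, Finset.sum_pair (by decide)]

lemma L2.forall {P : L2 → Prop} : (∀ i, P i) ↔ P a1 ∧ P a2 :=
  ⟨fun h => ⟨h a1, h a2⟩, fun h i => by cases i <;> simp [h]⟩

lemma R2.forall {P : R2 → Prop} : (∀ j, P j) ↔ P b1 ∧ P b2 :=
  ⟨fun h => ⟨h b1, h b2⟩, fun h j => by cases j <;> simp [h]⟩

lemma coeff_single_mul (i : L2) (j : R2) (c : F) (x : MonoidAlgebra F RB) (k : L2) (l : R2) :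
    (single (i, j) c * x).coeff (k, l) =
      if i = k then c * (x.coeff (a1, l) + x.coeff (a2, l)) else 0 := by
  classical
  rw [coeff_mul, coeff_single, Finsupp.sum_single_index (by simp),
    Finsupp.sum_fintype _ _ (by simp), Fintype.sum_prod_type]
  cases l <;> by_cases h : i = k <;> simp [h, L2.sum_univ, mul_add]

lemma coeff_mul_single (x : MonoidAlgebra F RB) (i : L2) (j : R2) (c : F) (k : L2) (l : R2) :
    (x * single (i, j) c).coeff (k, l) =
      if j = l then (x.coeff (k, b1) + x.coeff (k, b2)) * c else 0 := by
  classical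
  rw [coeff_mul, Finsupp.sum_fintype _ _ (by simp), Fintype.sum_prod_type]
  cases k <;> by_cases h : j = l <;> simp [h, R2.sum_univ, add_mul, coeff_single]

lemma coeffSum_apply (x : MonoidAlgebra F RB) :
    coeffSum F x =
      x.coeff (a1, b1) + x.coeff (a1, b2) + x.coeff (a2, b1) + x.coeff (a2, b2) := by
  change ∑ s : RB, x.coeff s = _
  rw [Fintype.sum_prod_type, L2.sum_univ, R2.sum_univ, R2.sum_univ]
  ring

@[simp] lemma coeff_Celt (i : L2) (j : R2) :
    (Celt F).coeff (i, j) = (if i = a1 then 1 else -1) * (if j = b1 then 1 else -1) := by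
  cases i <;> cases j <;> simp [Celt]

lemma mem_JL_iff (x : MonoidAlgebra F RB) :
    x ∈ JL F ↔ ∀ i, x.coeff (i, b1) + x.coeff (i, b2) = 0 := by
  simp [JL, DFunLike.ext_iff, Finsupp.mapDomain, Finsupp.sum_fintype, Fintype.sum_prod_type,
    R2.sum_univ, L2.sum_univ, Finsupp.single_apply, L2.forall]

lemma mem_JR_iff (x : MonoidAlgebra F RB) :
    x ∈ JR F ↔ ∀ j, x.coeff (a1, j) + x.coeff (a2, j) = 0 := by
  simp [JR, DFunLike.ext_iff, Finsupp.mapDomain, Finsupp.sum_fintype, Fintype.sum_prod_type,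
    R2.sum_univ, L2.sum_univ, Finsupp.single_apply, R2.forall]

lemma JL_inf_JR_eq_span : JL F ⊓ JR F = Submodule.span F {Celt F} := by
  refine le_antisymm (fun x hx => ?_) ?_
  · obtain ⟨hL, hR⟩ := Submodule.mem_inf.mp hx
    rw [mem_JL_iff] at hL
    rw [mem_JR_iff] at hR
    have h12 : x.coeff (a1, b2) = -x.coeff (a1, b1) := by linear_combination hL a1
    have h21 : x.coeff (a2, b1) = -x.coeff (a1, b1) := by linear_combination hR b1
    have h22 : x.coeff (a2, b2) = x.coeff (a1, b1) := by linear_combination hL a2 - hR b1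
    refine Submodule.mem_span_singleton.mpr ⟨x.coeff (a1, b1), ?_⟩
    ext ⟨i, j⟩
    cases i <;> cases j <;> simp [h12, h21, h22]
  · rw [Submodule.span_singleton_le_iff_mem, Submodule.mem_inf, mem_JL_iff, mem_JR_iff]
    simp [R2.forall]

lemma sub_single_mul_eq_smul_Celt (x : MonoidAlgebra F RB) (hx : coeffSum F x = 0) :
    (single (a1, b1) 1 - single (a2, b1) 1) * x =
      (x.coeff (a1, b1) + x.coeff (a2, b1)) • Celt F := by
  have h22 : x.coeff (a2, b2) = -(x.coeff (a1, b1) + x.coeff (a1, b2) + x.coeff (a2, b1)) := by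
    linear_combination hx - coeffSum_apply x
  ext ⟨i, j⟩
  cases i <;> cases j <;> simp [sub_mul, coeff_single_mul, h22] <;> ring

lemma mul_sub_single_eq_smul_Celt (x : MonoidAlgebra F RB) (hx : coeffSum F x = 0) :
    x * (single (a1, b1) 1 - single (a1, b2) 1) =
      (x.coeff (a1, b1) + x.coeff (a1, b2)) • Celt F := by
  have h22 : x.coeff (a2, b2) = -(x.coeff (a1, b1) + x.coeff (a1, b2) + x.coeff (a2, b1)) := by
    linear_combination hx - coeffSum_apply x
  ext ⟨i, j⟩
  cases i <;> cases j <;> simp [mul_sub, coeff_mul_single, h22]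

lemma sub_single_mul_mul_sub_single_eq_smul_Celt (x : MonoidAlgebra F RB) :
    (single (a1, b1) 1 - single (a2, b1) 1) * x * (single (a1, b1) 1 - single (a1, b2) 1) =
      coeffSum F x • Celt F := by
  rw [coeffSum_apply]
  ext ⟨i, j⟩
  cases i <;> cases j <;> simp [sub_mul, mul_sub, coeff_single_mul, coeff_mul_single] <;> ring

lemma exists_smul_Celt_mem {J : Submodule F (MonoidAlgebra F RB)} (hJ : IsTwoSidedIdeal J)
    {x : MonoidAlgebra F RB} (hxJ : x ∈ J) (hx : x ≠ 0) : ∃ t : F, t ≠ 0 ∧ t • Celt F ∈ J := by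
  rcases ne_or_eq (coeffSum F x) 0 with hσ | hσ
  · refine ⟨_, hσ, ?_⟩
    rw [← sub_single_mul_mul_sub_single_eq_smul_Celt]
    exact (hJ _ _ (hJ _ _ hxJ).1).2
  rcases ne_or_eq (x.coeff (a1, b1) + x.coeff (a2, b1)) 0 with hcol | hcol
  · refine ⟨_, hcol, ?_⟩
    rw [← sub_single_mul_eq_smul_Celt x hσ]
    exact (hJ _ _ hxJ).1
  rcases ne_or_eq (x.coeff (a1, b1) + x.coeff (a1, b2)) 0 with hrow | hrow
  · refine ⟨_, hrow, ?_⟩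
    rw [← mul_sub_single_eq_smul_Celt x hσ]
    exact (hJ _ _ hxJ).2
  rw [coeffSum_apply] at hσ
  have hxC : x ∈ JL F ⊓ JR F := by
    rw [Submodule.mem_inf, mem_JL_iff, mem_JR_iff]
    simp only [L2.forall, R2.forall]
    exact ⟨⟨hrow, by linear_combination hσ - hrow⟩, ⟨hcol, by linear_combination hσ - hcol⟩⟩
  rw [JL_inf_JR_eq_span, Submodule.mem_span_singleton] at hxC
  obtain ⟨t, rfl⟩ := hxC
  exact ⟨t, left_ne_zero_of_smul hx, hxJ⟩

end

/-- `J_L ∩ J_R = F·C` is the unique minimal nonzero two-sided ideal of the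
semigroup algebra of the 2x2 rectangular band: every nonzero two-sided ideal
contains it. -/
theorem JL_inf_JR_unique_minimal :
    JL F ⊓ JR F = Submodule.span F {Celt F} ∧
    ∀ J : Submodule F (MonoidAlgebra F RB),
      IsTwoSidedIdeal J → J ≠ ⊥ → Submodule.span F {Celt F} ≤ J := by
  refine ⟨JL_inf_JR_eq_span, fun J hJ hJ0 => ?_⟩
  obtain ⟨x, hxJ, hx⟩ := (Submodule.ne_bot_iff J).1 hJ0
  obtain ⟨t, ht, htJ⟩ := exists_smul_Celt_mem hJ hxJ hx
  rw [Submodule.span_singleton_le_iff_mem]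
  exact (Submodule.smul_mem_iff J ht).1 htJ
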